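/- Let E be an alternating 3-form satisfying the structure equation, and suppose for w₁, w₂ the contractions E(w₁,·,·), E(w₂,·,·) are of type (1,1). With E^w = (5E(w,·,·) - 3E(w,i·,i·))/8, one has for all λ: -E^{w₂}(w₁,λ) + E^{w₁}(w₂,λ) = (1/8)(-7E(w₂,w₁,λ) - 3E(iw₂,iw₁,λ)). -/

import Mathlib

/-!
For a contraction `E(w,·,·)` of type (1,1) the defining formula collapses to
`E^w = E(w,·,·)/4`, so the left side is `-E(w₂,w₁,λ)/2`. On the right, the structure equation
applied to `(w₂, w₁, λ)` together with the type (1,1) property of both contractions gives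
`E(iw₂,iw₁,λ) = E(w₁,w₂,λ) = -E(w₂,w₁,λ)`, so the right side is `-E(w₂,w₁,λ)/2` as well.
-/

section

variable {V : Type*} [AddCommGroup V] [Module ℝ V] (J : V →ₗ[ℝ] V)

def IsTypeOneOne (ω : V →ₗ[ℝ] V →ₗ[ℝ] ℝ) : Prop :=
  ∀ x y, ω (J x) (J y) = ω x y

variable {J} {E : V →ₗ[ℝ] V →ₗ[ℝ] V →ₗ[ℝ] ℝ}

theorem apply_J_J_eq_of_isTypeOneOne
    (hswap12 : ∀ x y z, E x y z = -E y x z)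
    (hstr : ∀ x y z, E x y z = E (J x) (J y) z + E x (J y) (J z) + E (J x) y (J z))
    {w1 w2 : V} (hw1 : IsTypeOneOne J (E w1)) (hw2 : IsTypeOneOne J (E w2)) (lam : V) :
    E (J w2) (J w1) lam = E w1 w2 lam := by
  have hS := hstr w2 w1 lam
  rw [hw2 w1 lam, hswap12 (J w2) w1, hw1 w2 lam] at hS
  linarith

theorem contraction_eq_quarter_of_isTypeOneOne {Ew : V → V → V → ℝ}
    {w : V} (hEw : ∀ x y, Ew w x y = (5 * E w x y - 3 * E w (J x) (J y)) / 8)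
    (hw : IsTypeOneOne J (E w)) (x y : V) :
    Ew w x y = E w x y / 4 := by
  rw [hEw, hw]
  ring

end

theorem statement7_general {V : Type*} [AddCommGroup V] [Module ℝ V]
    (J : V →ₗ[ℝ] V)
    (E : V →ₗ[ℝ] V →ₗ[ℝ] V →ₗ[ℝ] ℝ)
    (hswap12 : ∀ x y z, E x y z = -E y x z)
    (hstr : ∀ x y z, E x y z = E (J x) (J y) z + E x (J y) (J z) + E (J x) y (J z))
    (Ew : V → V → V → ℝ)
    (hEw : ∀ w x y, Ew w x y = (5 * E w x y - 3 * E w (J x) (J y)) / 8)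
    (w1 w2 : V)
    (hw1 : ∀ x y : V, E w1 (J x) (J y) = E w1 x y)
    (hw2 : ∀ x y : V, E w2 (J x) (J y) = E w2 x y)
    (lam : V) :
    -(Ew w2 w1 lam) + Ew w1 w2 lam
      = (1/8) * (-7 * E w2 w1 lam - 3 * E (J w2) (J w1) lam) := by
  rw [contraction_eq_quarter_of_isTypeOneOne (hEw w2) hw2,
    contraction_eq_quarter_of_isTypeOneOne (hEw w1) hw1,
    apply_J_J_eq_of_isTypeOneOne hswap12 hstr hw1 hw2, hswap12 w1 w2]
  ring

/-- Suppose the contractions `E(w₁,·,·)` and `E(w₂,·,·)` are of type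
(1,1).  With `E^w = (5E(w,·,·) - 3E(w,i·,i·))/8`, for all `λ`:
`-E^{w₂}(w₁,λ) + E^{w₁}(w₂,λ) = (1/8)(-7E(w₂,w₁,λ) - 3E(iw₂,iw₁,λ))`. -/
theorem statement7 {V : Type*} [AddCommGroup V] [Module ℝ V]
    (J : V →ₗ[ℝ] V) (hJ : ∀ v, J (J v) = -v)
    (E : V →ₗ[ℝ] V →ₗ[ℝ] V →ₗ[ℝ] ℝ)
    (hswap12 : ∀ x y z, E x y z = -E y x z)
    (hswap23 : ∀ x y z, E x y z = -E x z y)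
    (hstr : ∀ x y z, E x y z = E (J x) (J y) z + E x (J y) (J z) + E (J x) y (J z))
    (Ew : V → V → V → ℝ)
    (hEw : ∀ w x y, Ew w x y = (5 * E w x y - 3 * E w (J x) (J y)) / 8)
    (w1 w2 : V)
    (hw1 : ∀ x y : V, E w1 (J x) (J y) = E w1 x y)
    (hw2 : ∀ x y : V, E w2 (J x) (J y) = E w2 x y)
    (lam : V) :
    -(Ew w2 w1 lam) + Ew w1 w2 lam
      = (1/8) * (-7 * E w2 w1 lam - 3 * E (J w2) (J w1) lam) :=
  statement7_general J E hswap12 hstr Ew hEw w1 w2 hw1 hw2 lam
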